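/- arXiv:2107.14181 — 3 statements merged into one kernel-verified Lean document; each statement's English description precedes it below -/
import Mathlib

section
/- Define the G-twirl G(ρ) := ∫_G dg U(g) ρ U(g)† with respect to the Haar measure on a compact group G with unitary representation U on a finite-dimensional Hilbert space. Then for any density operators η on H_R and ρ on H_A (with the tensor product representation g ↦ U_R(g) ⊗ U_A(g)), G(G_R(η) ⊗ ρ) = G_R(η) ⊗ G_A(ρ), where G_R and G_A denote the twirls on the individual systems. -/
open Matrix MeasureTheory
open scoped Kronecker ComplexOrder

attribute [local instance] Matrix.normedAddCommGroup Matrix.normedSpace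

/-- The twirl of `M` with respect to the family of unitaries `U g`, averaged over `μ`. -/
noncomputable def twirl {G : Type} [MeasurableSpace G] (μ : Measure G)
    {n : Type} [Fintype n] (U : G → Matrix n n ℂ) (M : Matrix n n ℂ) : Matrix n n ℂ :=
  ∫ g, U g * M * (U g)ᴴ ∂μ

/-!
The twirl `T := G_R(η)` is invariant under conjugation by every `U_R(h)`, by left invariance of
the Haar measure. Hence `(U_R(g) ⊗ U_A(g)) (T ⊗ ρ) (U_R(g) ⊗ U_A(g))† = T ⊗ U_A(g) ρ U_A(g)†`,
and integrating over `g` commutes with the linear map `X ↦ T ⊗ X`.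
-/

theorem Continuous.mul_mul_conjTranspose {X α : Type*} [TopologicalSpace X] [TopologicalSpace α]
    [NonUnitalNonAssocSemiring α] [Star α] [IsTopologicalSemiring α] [ContinuousStar α]
    {n : Type*} [Fintype n] {U : X → Matrix n n α} (hU : Continuous U) (M : Matrix n n α) :
    Continuous fun x => U x * M * (U x)ᴴ :=
  (hU.matrix_mul continuous_const).matrix_mul hU.matrix_conjTranspose

section Twirl

variable {G : Type} [MeasurableSpace G] [TopologicalSpace G] [CompactSpace G] [BorelSpace G]

theorem integral_linearMap_comm_of_continuous (μ : Measure G) [IsFiniteMeasure μ]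
    {E F : Type*} [NormedAddCommGroup E] [NormedSpace ℂ E] [FiniteDimensional ℂ E]
    [NormedAddCommGroup F] [NormedSpace ℂ F] [CompleteSpace F]
    (L : E →ₗ[ℂ] F) {f : G → E} (hf : Continuous f) :
    ∫ g, L (f g) ∂μ = L (∫ g, f g ∂μ) :=
  L.toContinuousLinearMap.integral_comp_comm
    (hf.integrable_of_hasCompactSupport (HasCompactSupport.of_compactSpace f))

variable {n : Type} [Fintype n]

theorem conj_twirl_eq_twirl [Group G] [MeasurableMul G] (μ : Measure G) [IsFiniteMeasure μ]
    [μ.IsMulLeftInvariant] {U : G → Matrix n n ℂ} (hU_mul : ∀ g h, U (g * h) = U g * U h)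
    (hU : Continuous U) (M : Matrix n n ℂ) (h : G) :
    U h * twirl μ U M * (U h)ᴴ = twirl μ U M := by
  let conjBy : Matrix n n ℂ →ₗ[ℂ] Matrix n n ℂ :=
    (LinearMap.mulRight ℂ (U h)ᴴ).comp (LinearMap.mulLeft ℂ (U h))
  calc U h * twirl μ U M * (U h)ᴴ
      = ∫ g, U h * (U g * M * (U g)ᴴ) * (U h)ᴴ ∂μ :=
        (integral_linearMap_comm_of_continuous μ conjBy (hU.mul_mul_conjTranspose M)).symm
    _ = ∫ g, U (h * g) * M * (U (h * g))ᴴ ∂μ := by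
        simp only [hU_mul, conjTranspose_mul, mul_assoc]
    _ = twirl μ U M := integral_mul_left_eq_self (fun g => U g * M * (U g)ᴴ) h

theorem twirl_kronecker_of_conj_eq {m : Type} [Fintype m] (μ : Measure G) [IsFiniteMeasure μ]
    {UR : G → Matrix m m ℂ} {UA : G → Matrix n n ℂ} (hUA : Continuous UA) {T : Matrix m m ℂ}
    (hT : ∀ g, UR g * T * (UR g)ᴴ = T) (ρ : Matrix n n ℂ) :
    twirl μ (fun g => UR g ⊗ₖ UA g) (T ⊗ₖ ρ) = T ⊗ₖ twirl μ UA ρ := by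
  calc ∫ g, (UR g ⊗ₖ UA g) * (T ⊗ₖ ρ) * (UR g ⊗ₖ UA g)ᴴ ∂μ
      = ∫ g, T ⊗ₖ (UA g * ρ * (UA g)ᴴ) ∂μ := by
        simp only [conjTranspose_kronecker, ← mul_kronecker_mul, hT]
    _ = T ⊗ₖ twirl μ UA ρ :=
        integral_linearMap_comm_of_continuous μ (kroneckerBilinear T) (hUA.mul_mul_conjTranspose ρ)

end Twirl

theorem twirl_twirled_product_general {G : Type} [Group G] [TopologicalSpace G] [IsTopologicalGroup G]
    [CompactSpace G] [MeasurableSpace G] [BorelSpace G]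
    (μ : Measure G) [μ.IsHaarMeasure]
    {R A : Type} [Fintype R] [Fintype A]
    (UR : G → Matrix R R ℂ) (UA : G → Matrix A A ℂ)
    (hURhom : ∀ g h, UR (g * h) = UR g * UR h)
    (hURcont : Continuous UR) (hUAcont : Continuous UA)
    (η : Matrix R R ℂ)
    (ρ : Matrix A A ℂ) :
    twirl μ (fun g => UR g ⊗ₖ UA g) ((twirl μ UR η) ⊗ₖ ρ)
      = (twirl μ UR η) ⊗ₖ (twirl μ UA ρ) :=
  twirl_kronecker_of_conj_eq μ hUAcont (conj_twirl_eq_twirl μ hURhom hURcont η) ρ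

/-- `G(G_R(η) ⊗ ρ) = G_R(η) ⊗ G_A(ρ)` for the joint twirl with respect to
the representation `g ↦ U_R(g) ⊗ U_A(g)` of a compact group, with Haar probability
measure `μ`. -/
theorem twirl_twirled_product {G : Type} [Group G] [TopologicalSpace G] [IsTopologicalGroup G]
    [CompactSpace G] [MeasurableSpace G] [BorelSpace G]
    (μ : Measure G) [μ.IsHaarMeasure] [IsProbabilityMeasure μ]
    {R A : Type} [Fintype R] [Fintype A] [DecidableEq R] [DecidableEq A]
    (UR : G → Matrix R R ℂ) (UA : G → Matrix A A ℂ)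
    (hURhom : ∀ g h, UR (g * h) = UR g * UR h)
    (hUAhom : ∀ g h, UA (g * h) = UA g * UA h)
    (hURunitary : ∀ g, UR g ∈ Matrix.unitaryGroup R ℂ)
    (hUAunitary : ∀ g, UA g ∈ Matrix.unitaryGroup A ℂ)
    (hURcont : Continuous UR) (hUAcont : Continuous UA)
    (η : Matrix R R ℂ) (hη : η.PosSemidef) (hηtr : Matrix.trace η = 1)
    (ρ : Matrix A A ℂ) (hρ : ρ.PosSemidef) (hρtr : Matrix.trace ρ = 1) :
    twirl μ (fun g => UR g ⊗ₖ UA g) ((twirl μ UR η) ⊗ₖ ρ)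
      = (twirl μ UR η) ⊗ₖ (twirl μ UA ρ) :=
  twirl_twirled_product_general μ UR UA hURhom hURcont hUAcont η ρ
end

section
/- Let Λ_p(η) := pη + (1-p)·(1/d) for p ∈ [0,1], where d = dim H_R. Define Φ_η(τ) := Φ(G(η ⊗ τ)) with Φ the conditional min-entropy SDP. Then Φ_{Λ_p(η)}(τ) = p·Φ_η(τ) + (1-p)/d. -/
/-!
The twirl is linear, and since `U_R` is unitary it sends `1 ⊗ τ` to `1 ⊗ σ` with `σ` the twirl of
`τ` on `A`, a state. Hence the depolarized operator twirls to `p • M + 1 ⊗ (c • σ)`, where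
`M = G(η ⊗ τ)` and `c = (1 - p) / d`. The SDP `Φ` is positively homogeneous (rescale `X`), and for
`M ≥ 0`, `S ≥ 0` it satisfies `Φ(M + 1 ⊗ S) = Φ(M) + tr S`: `X ↦ X - S` is a bijection of feasible
sets, because `1 ⊗ (X - S) ≥ M ≥ 0` already forces `X - S ≥ 0`. As `tr σ = tr τ = 1`, the formula
follows.
-/

open Matrix MeasureTheory
open scoped Kronecker ComplexOrder

attribute [local instance] Matrix.normedAddCommGroup Matrix.normedSpace

/-- The conditional min-entropy SDP functional. -/
noncomputable def Phi {R A : Type} [Fintype R] [Fintype A] [DecidableEq R] [DecidableEq A]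
    (M : Matrix (R × A) (R × A) ℂ) : ℝ :=
  sInf {t : ℝ | ∃ X : Matrix A A ℂ, X.PosSemidef ∧
    ((1 : Matrix R R ℂ) ⊗ₖ X - M).PosSemidef ∧ t = (Matrix.trace X).re}

namespace Matrix

variable {𝕜 : Type*} [RCLike 𝕜] {n : Type*}

theorem isClosed_setOf_posSemidef [Fintype n] : IsClosed {M : Matrix n n 𝕜 | M.PosSemidef} := by
  simp_rw [posSemidef_iff_dotProduct_mulVec, Set.ofPred_and, Set.ofPred_forall]
  refine .inter (isClosed_eq continuous_id.matrix_conjTranspose continuous_id)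
    (isClosed_iInter fun x => isClosed_le continuous_const ?_)
  exact continuous_const.dotProduct (continuous_id.matrix_mulVec continuous_const)

theorem convex_setOf_posSemidef [Fintype n] : Convex ℝ {M : Matrix n n 𝕜 | M.PosSemidef} :=
  fun _ hA _ hB _ _ ha hb _ => (hA.smul ha).add (hB.smul hb)

theorem PosSemidef.of_one_kronecker {R A : Type*} [Fintype A] [DecidableEq R] [Nonempty R]
    {Z : Matrix A A 𝕜} (h : ((1 : Matrix R R 𝕜) ⊗ₖ Z).PosSemidef) : Z.PosSemidef := by
  obtain ⟨r⟩ := ‹Nonempty R›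
  convert h.submatrix fun a => (r, a)
  ext a b
  simp [kroneckerMap_apply]

theorem IsHermitian.exists_posSemidef_smul_one_sub [Fintype n] [DecidableEq n]
    {M : Matrix n n ℂ} (hM : M.IsHermitian) :
    ∃ t : ℝ, 0 ≤ t ∧ (t • (1 : Matrix n n ℂ) - M).PosSemidef := by
  open scoped Norms.L2Operator MatrixOrder in
  exact ⟨‖M‖, norm_nonneg M, by
    simpa [le_iff, Algebra.algebraMap_eq_smul_one] using
      IsSelfAdjoint.le_algebraMap_norm_self (a := M) hM⟩

end Matrix

section Integral

/- Integrability is obtained from continuity: under the local sup-norm instance,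
`Integrable f μ` does not elaborate for matrix-valued `f`, as the norm's topology is not reducibly
the product topology of `Matrix`. -/
variable {G : Type*} [MeasurableSpace G] [TopologicalSpace G] [OpensMeasurableSpace G]
  [CompactSpace G] {μ : Measure G} [IsFiniteMeasure μ]

theorem Continuous.integrable_of_compactSpace {E : Type*} [NormedAddCommGroup E] {f : G → E}
    (hf : Continuous f) : Integrable f μ :=
  hf.integrable_of_hasCompactSupport (.of_compactSpace f)

variable {n : Type*} [Fintype n]

theorem Matrix.integral_trace {f : G → Matrix n n ℂ} (hf : Continuous f) :
    ∫ g, trace (f g) ∂μ = trace (∫ g, f g ∂μ) :=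
  (LinearMap.toContinuousLinearMap (traceLinearMap n ℂ ℂ)).integral_comp_comm
    hf.integrable_of_compactSpace

theorem Matrix.integral_kronecker {l m : Type*} [Fintype l] [Fintype m] (K : Matrix l l ℂ)
    {f : G → Matrix m m ℂ} (hf : Continuous f) :
    ∫ g, K ⊗ₖ f g ∂μ = K ⊗ₖ ∫ g, f g ∂μ :=
  (LinearMap.toContinuousLinearMap <| kroneckerMapBilinear (LinearMap.mul ℂ ℂ) K).integral_comp_comm
    hf.integrable_of_compactSpace

theorem Matrix.posSemidef_integral [IsProbabilityMeasure μ] {f : G → Matrix n n ℂ}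
    (hf : Continuous f) (hpos : ∀ g, (f g).PosSemidef) : (∫ g, f g ∂μ).PosSemidef :=
  convex_setOf_posSemidef.integral_mem (μ := μ) isClosed_setOf_posSemidef (.of_forall hpos)
    hf.integrable_of_compactSpace

end Integral

theorem Continuous.matrix_kronecker {X α : Type*} [TopologicalSpace X] [TopologicalSpace α]
    [Mul α] [ContinuousMul α] {l m n p : Type*} {A : X → Matrix l m α} {B : X → Matrix n p α}
    (hA : Continuous A) (hB : Continuous B) : Continuous fun x => A x ⊗ₖ B x :=
  continuous_matrix fun _ _ => (hA.matrix_elem _ _).mul (hB.matrix_elem _ _)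

theorem Continuous.matrix_mul_mul_conjTranspose {G n : Type*} [TopologicalSpace G] [Fintype n]
    {U : G → Matrix n n ℂ} (hU : Continuous U) (M : Matrix n n ℂ) :
    Continuous fun g => U g * M * (U g)ᴴ :=
  (hU.matrix_mul continuous_const).matrix_mul hU.matrix_conjTranspose

section Twirl

variable {G : Type} [MeasurableSpace G] {μ : Measure G} {n : Type} [Fintype n]
  {U : G → Matrix n n ℂ}

theorem twirl_smul (c : ℝ) (M : Matrix n n ℂ) : twirl μ U (c • M) = c • twirl μ U M := by
  simp only [twirl, Matrix.mul_smul, Matrix.smul_mul]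
  exact integral_smul c _

variable [TopologicalSpace G] [OpensMeasurableSpace G] [CompactSpace G] [IsFiniteMeasure μ]

theorem twirl_add (hU : Continuous U) (M N : Matrix n n ℂ) :
    twirl μ U (M + N) = twirl μ U M + twirl μ U N := by
  simp only [twirl, Matrix.mul_add, Matrix.add_mul]
  exact integral_add (hU.matrix_mul_mul_conjTranspose M).integrable_of_compactSpace
    (hU.matrix_mul_mul_conjTranspose N).integrable_of_compactSpace

theorem twirl_posSemidef [IsProbabilityMeasure μ] (hU : Continuous U) {M : Matrix n n ℂ}
    (hM : M.PosSemidef) : (twirl μ U M).PosSemidef :=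
  Matrix.posSemidef_integral (hU.matrix_mul_mul_conjTranspose M) fun g =>
    hM.mul_mul_conjTranspose_same (U g)

theorem trace_twirl [DecidableEq n] [IsProbabilityMeasure μ] (hU : Continuous U)
    (hUu : ∀ g, U g ∈ unitaryGroup n ℂ) (M : Matrix n n ℂ) : trace (twirl μ U M) = trace M := by
  rw [twirl, ← Matrix.integral_trace (hU.matrix_mul_mul_conjTranspose M)]
  have conj : ∀ g, trace (U g * M * (U g)ᴴ) = trace M := fun g => by
    rw [trace_mul_cycle, ← star_eq_conjTranspose, mem_unitaryGroup_iff'.mp (hUu g), one_mul]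
  simp [conj]

theorem twirl_one_kronecker [DecidableEq n] {m : Type} [Fintype m] [DecidableEq m]
    {V : G → Matrix m m ℂ} (hV : Continuous V) (hUu : ∀ g, U g ∈ unitaryGroup n ℂ)
    (M : Matrix m m ℂ) :
    twirl μ (fun g => U g ⊗ₖ V g) (1 ⊗ₖ M) = 1 ⊗ₖ twirl μ V M := by
  have conj : ∀ g, U g ⊗ₖ V g * (1 ⊗ₖ M) * (U g ⊗ₖ V g)ᴴ = 1 ⊗ₖ (V g * M * (V g)ᴴ) := fun g => by
    rw [conjTranspose_kronecker, ← mul_kronecker_mul, ← mul_kronecker_mul, mul_one,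
      ← star_eq_conjTranspose, mem_unitaryGroup_iff.mp (hUu g)]
  simp_rw [twirl, conj]
  exact Matrix.integral_kronecker 1 (hV.matrix_mul_mul_conjTranspose M)

end Twirl

section Phi

variable {R A : Type} [Fintype R] [Fintype A] [DecidableEq R] [DecidableEq A]

theorem Phi_zero : Phi (0 : Matrix (R × A) (R × A) ℂ) = 0 := by
  refine IsLeast.csInf_eq ⟨⟨0, .zero, by simpa using .zero, by simp⟩, ?_⟩
  rintro _ ⟨X, hX, -, rfl⟩
  exact (Complex.le_def.mp hX.trace_nonneg).1

theorem Phi_smul (M : Matrix (R × A) (R × A) ℂ) {p : ℝ} (hp : 0 ≤ p) :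
    Phi (p • M) = p * Phi M := by
  rcases hp.eq_or_lt with rfl | hp
  · simp [Phi_zero]
  have rescale : ∀ Y : Matrix A A ℂ, (1 : Matrix R R ℂ) ⊗ₖ (p • Y) - p • M = p • (1 ⊗ₖ Y - M) :=
    fun Y => by rw [kronecker_smul, smul_sub]
  rw [Phi, Phi, ← smul_eq_mul, ← Real.sInf_smul_of_nonneg hp.le]
  congr 1
  ext t
  simp only [Set.mem_smul_set, Set.mem_ofPred_eq]
  constructor
  · rintro ⟨X, hX, hXM, rfl⟩
    have hX' : X = p • p⁻¹ • X := by rw [smul_smul, mul_inv_cancel₀ hp.ne', one_smul]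
    refine ⟨_, ⟨p⁻¹ • X, hX.smul (inv_nonneg.mpr hp.le), ?_, rfl⟩, ?_⟩
    · rw [hX', rescale] at hXM
      simpa [hp.ne'] using hXM.smul (inv_nonneg.mpr hp.le)
    · simp [trace_smul, hp.ne']
  · rintro ⟨_, ⟨Y, hY, hYM, rfl⟩, rfl⟩
    refine ⟨p • Y, hY.smul hp.le, (rescale Y).symm ▸ hYM.smul hp.le, ?_⟩
    simp [trace_smul]

theorem Phi_add_one_kronecker [Nonempty R] {M : Matrix (R × A) (R × A) ℂ} (hM : M.PosSemidef)
    {S : Matrix A A ℂ} (hS : S.PosSemidef) : Phi (M + 1 ⊗ₖ S) = Phi M + (trace S).re := by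
  have shift : ∀ Y : Matrix A A ℂ, (1 : Matrix R R ℂ) ⊗ₖ (Y + S) - (M + 1 ⊗ₖ S) = 1 ⊗ₖ Y - M :=
    fun Y => by rw [kronecker_add]; abel
  rw [Phi, Phi]
  refine Eq.trans ?_ ((OrderIso.addRight (trace S).re).map_csInf' ?_ ?_).symm
  · congr 1
    ext t
    simp only [Set.mem_image, Set.mem_ofPred_eq, OrderIso.addRight_apply]
    constructor
    · rintro ⟨X, hX, hXM, rfl⟩
      rw [← sub_add_cancel X S, shift] at hXM
      have hXS : ((1 : Matrix R R ℂ) ⊗ₖ (X - S)).PosSemidef := by simpa using hXM.add hM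
      exact ⟨_, ⟨X - S, hXS.of_one_kronecker, hXM, rfl⟩, by simp⟩
    · rintro ⟨_, ⟨Y, hY, hYM, rfl⟩, rfl⟩
      exact ⟨Y + S, hY.add hS, (shift Y).symm ▸ hYM, by simp⟩
  · obtain ⟨t, ht, hM'⟩ := hM.1.exists_posSemidef_smul_one_sub
    exact ⟨_, t • 1, PosSemidef.one.smul ht, by rwa [kronecker_smul, one_kronecker_one], rfl⟩
  · exact ⟨0, by rintro _ ⟨X, hX, -, rfl⟩; exact (Complex.le_def.mp hX.trace_nonneg).1⟩

end Phi

theorem Phi_depolarized_reference_general {G : Type} [TopologicalSpace G]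
    [CompactSpace G] [MeasurableSpace G] [BorelSpace G]
    (μ : Measure G) [IsProbabilityMeasure μ]
    {R A : Type} [Fintype R] [Fintype A] [DecidableEq R] [DecidableEq A]
    (UR : G → Matrix R R ℂ) (UA : G → Matrix A A ℂ)
    (hURunitary : ∀ g, UR g ∈ Matrix.unitaryGroup R ℂ)
    (hUAunitary : ∀ g, UA g ∈ Matrix.unitaryGroup A ℂ)
    (hURcont : Continuous UR) (hUAcont : Continuous UA)
    (η : Matrix R R ℂ) (hη : η.PosSemidef)
    (τ : Matrix A A ℂ) (hτ : τ.PosSemidef) (hτtr : Matrix.trace τ = 1)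
    (p : ℝ) (hp0 : 0 ≤ p) (hp1 : p ≤ 1) :
    Phi (twirl μ (fun g => UR g ⊗ₖ UA g)
        ((p • η + ((1 - p) * (Fintype.card R : ℝ)⁻¹) • (1 : Matrix R R ℂ)) ⊗ₖ τ))
      = p * Phi (twirl μ (fun g => UR g ⊗ₖ UA g) (η ⊗ₖ τ))
        + (1 - p) / (Fintype.card R : ℝ) := by
  set c := (1 - p) * (Fintype.card R : ℝ)⁻¹
  set M := twirl μ (fun g => UR g ⊗ₖ UA g) (η ⊗ₖ τ)
  set σ := twirl μ UA τ
  have hU : Continuous fun g => UR g ⊗ₖ UA g := hURcont.matrix_kronecker hUAcont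
  have hdecomp : twirl μ (fun g => UR g ⊗ₖ UA g) ((p • η + c • (1 : Matrix R R ℂ)) ⊗ₖ τ)
      = p • M + 1 ⊗ₖ (c • σ) := by
    rw [add_kronecker, smul_kronecker, smul_kronecker, twirl_add hU, twirl_smul, twirl_smul,
      twirl_one_kronecker hUAcont hURunitary, kronecker_smul]
  have hσtr : (trace (c • σ)).re = c := by simp [σ, trace_twirl hUAcont hUAunitary, hτtr]
  have hshift : Phi (p • M + 1 ⊗ₖ (c • σ)) = Phi (p • M) + c := by
    rcases isEmpty_or_nonempty R with hR | hR
    · simp [c] -- `d = 0`, so `c = 0` by the convention `0⁻¹ = 0`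
    · have hc : 0 ≤ c := mul_nonneg (sub_nonneg.mpr hp1) (by positivity)
      rw [Phi_add_one_kronecker ((twirl_posSemidef hU (hη.kronecker hτ)).smul hp0)
        ((twirl_posSemidef hUAcont hτ).smul hc), hσtr]
  rw [hdecomp, hshift, Phi_smul _ hp0, div_eq_mul_inv]

/-- with `Λ_p(η) := p η + (1-p) 𝟙/d` and `Φ_η(τ) := Φ(G(η ⊗ τ))`,
one has `Φ_{Λ_p(η)}(τ) = p Φ_η(τ) + (1-p)/d`. -/
theorem Phi_depolarized_reference {G : Type} [Group G] [TopologicalSpace G]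
    [IsTopologicalGroup G] [CompactSpace G] [MeasurableSpace G] [BorelSpace G]
    (μ : Measure G) [μ.IsHaarMeasure] [IsProbabilityMeasure μ]
    {R A : Type} [Fintype R] [Fintype A] [DecidableEq R] [DecidableEq A]
    (UR : G → Matrix R R ℂ) (UA : G → Matrix A A ℂ)
    (hURhom : ∀ g h, UR (g * h) = UR g * UR h)
    (hUAhom : ∀ g h, UA (g * h) = UA g * UA h)
    (hURunitary : ∀ g, UR g ∈ Matrix.unitaryGroup R ℂ)
    (hUAunitary : ∀ g, UA g ∈ Matrix.unitaryGroup A ℂ)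
    (hURcont : Continuous UR) (hUAcont : Continuous UA)
    (η : Matrix R R ℂ) (hη : η.PosSemidef) (hηtr : Matrix.trace η = 1)
    (τ : Matrix A A ℂ) (hτ : τ.PosSemidef) (hτtr : Matrix.trace τ = 1)
    (p : ℝ) (hp0 : 0 ≤ p) (hp1 : p ≤ 1) :
    Phi (twirl μ (fun g => UR g ⊗ₖ UA g)
        ((p • η + ((1 - p) * (Fintype.card R : ℝ)⁻¹) • (1 : Matrix R R ℂ)) ⊗ₖ τ))
      = p * Phi (twirl μ (fun g => UR g ⊗ₖ UA g) (η ⊗ₖ τ))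
        + (1 - p) / (Fintype.card R : ℝ) :=
  Phi_depolarized_reference_general μ UR UA hURunitary hUAunitary hURcont hUAcont η hη τ hτ hτtr p
    hp0 hp1
end

section
/- Data-processing: let E_R be a unital completely positive trace-preserving map on B(H_R) and N_A a completely positive trace-preserving map from B(H_A) to B(H_B). Then for any positive semidefinite bipartite M, Φ((E_R ⊗ id)(M)) ≤ Φ(M) and Φ((id ⊗ N_A)(M)) ≤ Φ(M), where Φ(M) := inf { Tr[X] : X ≥ 0, 1 ⊗ X ≥ M }. -/
open Matrix
open scoped Kronecker ComplexOrder

/-- Ampliation `id_R ⊗ L` of a linear map acting on the second tensor factor. -/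
def amplA {R A B : Type} (L : Matrix A A ℂ →ₗ[ℂ] Matrix B B ℂ)
    (M : Matrix (R × A) (R × A) ℂ) : Matrix (R × B) (R × B) ℂ :=
  fun p q => L (Matrix.of fun a b => M (p.1, a) (q.1, b)) p.2 q.2

/-- Ampliation `L ⊗ id_A` of a linear map acting on the first tensor factor. -/
def amplR {R R' A : Type} (L : Matrix R R ℂ →ₗ[ℂ] Matrix R' R' ℂ)
    (M : Matrix (R × A) (R × A) ℂ) : Matrix (R' × A) (R' × A) ℂ :=
  fun p q => L (Matrix.of fun r r' => M (r, p.2) (r', q.2)) p.1 q.1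

/-- Complete positivity of a linear map between matrix algebras. -/
def IsCompletelyPositive {A B : Type} [Fintype A] [Fintype B]
    (L : Matrix A A ℂ →ₗ[ℂ] Matrix B B ℂ) : Prop :=
  ∀ (k : Type) [Fintype k] [DecidableEq k],
    ∀ M : Matrix (k × A) (k × A) ℂ, M.PosSemidef → (amplA L M).PosSemidef

/-!
`Φ(M)` is the optimal value of a minimisation SDP, so it suffices to push every feasible point
`X` for `M` to a feasible point for the processed operator with no larger trace. For a unital CP
map `E` on `R`, `X` itself stays feasible, since `1 ⊗ X - (E ⊗ id)(M) = (E ⊗ id)(1 ⊗ X - M)`.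
For a CPTP map `N` on `A`, `N X` is feasible with the same trace, since
`1 ⊗ N X - (id ⊗ N)(M) = (id ⊗ N)(1 ⊗ X - M)`. The infimum is over a nonempty set because a
Hermitian `M` satisfies `M ≤ ‖M‖ • 1`.
-/

open scoped Matrix.Norms.L2Operator MatrixOrder in
theorem Matrix.IsHermitian.exists_posSemidef_smul_one_sub_s10 {n : Type} [Fintype n] [DecidableEq n]
    {M : Matrix n n ℂ} (hM : M.IsHermitian) :
    ∃ c : ℝ, 0 ≤ c ∧ ((c : ℂ) • (1 : Matrix n n ℂ) - M).PosSemidef := by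
  refine ⟨‖M‖, norm_nonneg M, ?_⟩
  have := IsSelfAdjoint.le_algebraMap_norm_self hM
  rwa [Algebra.algebraMap_eq_smul_one, ← Complex.coe_smul, Matrix.le_iff] at this

section Ampliation

variable {R R' A B : Type}

theorem amplA_sub (L : Matrix A A ℂ →ₗ[ℂ] Matrix B B ℂ) (M M' : Matrix (R × A) (R × A) ℂ) :
    amplA L (M - M') = amplA L M - amplA L M' := by
  ext p q
  have : (of fun a b => (M - M') (p.1, a) (q.1, b)) =
      of (fun a b => M (p.1, a) (q.1, b)) - of fun a b => M' (p.1, a) (q.1, b) := rfl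
  dsimp only [amplA]
  rw [this, map_sub]
  rfl

theorem amplR_sub (L : Matrix R R ℂ →ₗ[ℂ] Matrix R' R' ℂ) (M M' : Matrix (R × A) (R × A) ℂ) :
    amplR L (M - M') = amplR L M - amplR L M' := by
  ext p q
  have : (of fun r r' => (M - M') (r, p.2) (r', q.2)) =
      of (fun r r' => M (r, p.2) (r', q.2)) - of fun r r' => M' (r, p.2) (r', q.2) := rfl
  dsimp only [amplR]
  rw [this, map_sub]
  rfl

theorem amplA_kronecker (L : Matrix A A ℂ →ₗ[ℂ] Matrix B B ℂ) (Y : Matrix R R ℂ)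
    (X : Matrix A A ℂ) : amplA L (Y ⊗ₖ X) = Y ⊗ₖ L X := by
  ext p q
  have : (of fun a b => (Y ⊗ₖ X) (p.1, a) (q.1, b)) = Y p.1 q.1 • X := by ext; simp
  dsimp only [amplA]
  rw [this, map_smul]
  rfl

theorem amplR_kronecker (L : Matrix R R ℂ →ₗ[ℂ] Matrix R' R' ℂ) (Y : Matrix R R ℂ)
    (X : Matrix A A ℂ) : amplR L (Y ⊗ₖ X) = L Y ⊗ₖ X := by
  ext p q
  have : (of fun r r' => (Y ⊗ₖ X) (r, p.2) (r', q.2)) = X p.2 q.2 • Y := by ext; simp [mul_comm]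
  dsimp only [amplR]
  rw [this, map_smul, Matrix.smul_apply, kronecker_apply, smul_eq_mul, mul_comm]

theorem amplR_eq_submatrix_amplA (L : Matrix R R ℂ →ₗ[ℂ] Matrix R' R' ℂ)
    (M : Matrix (R × A) (R × A) ℂ) :
    amplR L M = (amplA L (M.submatrix Prod.swap Prod.swap)).submatrix Prod.swap Prod.swap :=
  rfl

end Ampliation

namespace IsCompletelyPositive

variable {R R' A B : Type} [Fintype R] [Fintype R'] [Fintype A] [Fintype B]

theorem map_posSemidef {L : Matrix A A ℂ →ₗ[ℂ] Matrix B B ℂ} (hL : IsCompletelyPositive L)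
    {X : Matrix A A ℂ} (hX : X.PosSemidef) : (L X).PosSemidef :=
  (hL Unit _ (hX.submatrix Prod.snd)).submatrix fun b => ((), b)

theorem amplR_posSemidef [DecidableEq A] {L : Matrix R R ℂ →ₗ[ℂ] Matrix R' R' ℂ}
    (hL : IsCompletelyPositive L) {M : Matrix (R × A) (R × A) ℂ} (hM : M.PosSemidef) :
    (amplR L M).PosSemidef := by
  rw [amplR_eq_submatrix_amplA]
  exact (hL A _ (hM.submatrix Prod.swap)).submatrix Prod.swap

end IsCompletelyPositive

theorem bddBelow_Phi_set {R A : Type} [Fintype A] [DecidableEq R] (M : Matrix (R × A) (R × A) ℂ) :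
    BddBelow {t : ℝ | ∃ X : Matrix A A ℂ, X.PosSemidef ∧
      ((1 : Matrix R R ℂ) ⊗ₖ X - M).PosSemidef ∧ t = (Matrix.trace X).re} := by
  refine ⟨0, ?_⟩
  rintro _ ⟨X, hX, -, rfl⟩
  exact (Complex.nonneg_iff.mp hX.trace_nonneg).1

section Phi

variable {R R' A A' : Type} [Fintype R] [Fintype R'] [Fintype A] [Fintype A']
  [DecidableEq R] [DecidableEq R'] [DecidableEq A] [DecidableEq A']

theorem exists_posSemidef_one_kronecker_sub {M : Matrix (R × A) (R × A) ℂ}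
    (hM : M.IsHermitian) :
    ∃ X : Matrix A A ℂ, X.PosSemidef ∧ ((1 : Matrix R R ℂ) ⊗ₖ X - M).PosSemidef := by
  obtain ⟨c, hc, hcM⟩ := hM.exists_posSemidef_smul_one_sub_s10
  refine ⟨(c : ℂ) • 1, PosSemidef.one.smul (by exact_mod_cast hc), ?_⟩
  rwa [kronecker_smul, one_kronecker_one]

theorem Phi_le_Phi_of_forall_feasible {M : Matrix (R × A) (R × A) ℂ}
    {M' : Matrix (R' × A') (R' × A') ℂ} (hM : M.IsHermitian)
    (h : ∀ X : Matrix A A ℂ, X.PosSemidef → ((1 : Matrix R R ℂ) ⊗ₖ X - M).PosSemidef →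
      ∃ Y : Matrix A' A' ℂ, Y.PosSemidef ∧ ((1 : Matrix R' R' ℂ) ⊗ₖ Y - M').PosSemidef ∧
        (Matrix.trace Y).re ≤ (Matrix.trace X).re) :
    Phi M' ≤ Phi M := by
  obtain ⟨X₀, hX₀, hfeas₀⟩ := exists_posSemidef_one_kronecker_sub hM
  refine le_csInf ⟨_, X₀, hX₀, hfeas₀, rfl⟩ ?_
  rintro _ ⟨X, hX, hfeas, rfl⟩
  obtain ⟨Y, hY, hfeas', hle⟩ := h X hX hfeas
  exact (csInf_le (bddBelow_Phi_set M') ⟨Y, hY, hfeas', rfl⟩).trans hle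

theorem Phi_amplR_le {E : Matrix R R ℂ →ₗ[ℂ] Matrix R' R' ℂ} (hE : IsCompletelyPositive E)
    (hE_unital : E 1 = 1) {M : Matrix (R × A) (R × A) ℂ} (hM : M.IsHermitian) :
    Phi (amplR E M) ≤ Phi M := by
  refine Phi_le_Phi_of_forall_feasible hM fun X hX hfeas => ⟨X, hX, ?_, le_rfl⟩
  rw [← hE_unital, ← amplR_kronecker, ← amplR_sub]
  exact hE.amplR_posSemidef hfeas

theorem Phi_amplA_le {N : Matrix A A ℂ →ₗ[ℂ] Matrix A' A' ℂ} (hN : IsCompletelyPositive N)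
    (hN_trace : ∀ X, Matrix.trace (N X) = Matrix.trace X) {M : Matrix (R × A) (R × A) ℂ}
    (hM : M.IsHermitian) : Phi (amplA N M) ≤ Phi M := by
  refine Phi_le_Phi_of_forall_feasible hM fun X hX hfeas =>
    ⟨N X, hN.map_posSemidef hX, ?_, by rw [hN_trace]⟩
  rw [← amplA_kronecker, ← amplA_sub]
  exact hN R _ hfeas

end Phi

theorem Phi_data_processing_general {R A B : Type} [Fintype R] [Fintype A] [Fintype B]
    [DecidableEq R] [DecidableEq A] [DecidableEq B]
    (E : Matrix R R ℂ →ₗ[ℂ] Matrix R R ℂ)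
    (hECP : IsCompletelyPositive E)
    (hEunital : E 1 = 1)
    (N : Matrix A A ℂ →ₗ[ℂ] Matrix B B ℂ)
    (hNCP : IsCompletelyPositive N)
    (hNTP : ∀ X, Matrix.trace (N X) = Matrix.trace X)
    (M : Matrix (R × A) (R × A) ℂ) (hM : M.PosSemidef) :
    Phi (amplR E M) ≤ Phi M ∧ Phi (amplA N M) ≤ Phi M :=
  ⟨Phi_amplR_le hECP hEunital hM.isHermitian, Phi_amplA_le hNCP hNTP hM.isHermitian⟩

/-- data processing for `Φ` under a unital CPTP map on `R` and a CPTP map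
on `A`. -/
theorem Phi_data_processing {R A B : Type} [Fintype R] [Fintype A] [Fintype B]
    [DecidableEq R] [DecidableEq A] [DecidableEq B]
    (E : Matrix R R ℂ →ₗ[ℂ] Matrix R R ℂ)
    (hECP : IsCompletelyPositive E)
    (hETP : ∀ X, Matrix.trace (E X) = Matrix.trace X)
    (hEunital : E 1 = 1)
    (N : Matrix A A ℂ →ₗ[ℂ] Matrix B B ℂ)
    (hNCP : IsCompletelyPositive N)
    (hNTP : ∀ X, Matrix.trace (N X) = Matrix.trace X)
    (M : Matrix (R × A) (R × A) ℂ) (hM : M.PosSemidef) :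
    Phi (amplR E M) ≤ Phi M ∧ Phi (amplA N M) ≤ Phi M :=
  Phi_data_processing_general E hECP hEunital N hNCP hNTP M hM
end
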